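/- arXiv:2103.12027 — 2 statements merged into one kernel-verified Lean document; each statement's English description precedes it below -/
import Mathlib

section
/- Let A be a ring, and let 0 → x₂ → x → x₁ → 0 and 0 → x₁ → x → x₃ → 0 be two short exact sequences of finite-length (or finite-dimensional over a field) A-modules with the same middle term x. Assume Ext¹_A(x₁,x₁)=0, dim Hom_A(x₁,x₂) = dim Hom_A(x₁,x₃), and dim Hom_A(x₂,x₁) = dim Hom_A(x₃,x₁). Then both short exact sequences split; in particular x₃ ≅ x₂. -/
/-!
STATEMENT 0: Let A be a K-algebra (K a field), and let
0 → x₂ → x → x₁ → 0 and 0 → x₁ → x → x₃ → 0 be two short exact sequences of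
finite-dimensional A-modules with the same middle term x.  Assume Ext¹_A(x₁,x₁)=0,
dim Hom_A(x₁,x₂) = dim Hom_A(x₁,x₃) and dim Hom_A(x₂,x₁) = dim Hom_A(x₃,x₁).
Then both short exact sequences split and x₃ ≅ x₂.
-/

open CategoryTheory CategoryTheory.Limits Module Opposite

universe u

/-- `Ext¹_A(X,Y)`, as a `K`-module, for a `K`-algebra `A`. -/
noncomputable def ext1 (K A : Type u) [Field K] [Ring A] [Algebra K A]
    (X Y : ModuleCat.{u} A) : ModuleCat K :=
  ((Ext K (ModuleCat.{u} A) 1).obj (op X)).obj Y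



section Cancellation

variable {K A : Type u} [Field K] [Ring A] [Algebra K A]

/-- Schur complement: if `e : M × B ≃ M' × C` has bijective upper-left component, `B ≃ C`. -/
lemma schur_cancel {M B M' C : Type u}
    [AddCommGroup M] [Module A M] [AddCommGroup B] [Module A B]
    [AddCommGroup M'] [Module A M'] [AddCommGroup C] [Module A C]
    (e : (M × B) ≃ₗ[A] (M' × C))
    (ha : Function.Bijective ((LinearMap.fst A M' C).comp
      (e.toLinearMap.comp (LinearMap.inl A M B)))) :
    Nonempty (B ≃ₗ[A] C) := by
  set a := (LinearMap.fst A M' C).comp (e.toLinearMap.comp (LinearMap.inl A M B)) with ha_def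
  set b := (LinearMap.fst A M' C).comp (e.toLinearMap.comp (LinearMap.inr A M B)) with hb_def
  set c := (LinearMap.snd A M' C).comp (e.toLinearMap.comp (LinearMap.inl A M B)) with hc_def
  set d := (LinearMap.snd A M' C).comp (e.toLinearMap.comp (LinearMap.inr A M B)) with hd_def
  have he : ∀ (m : M) (x : B), e (m, x) = (a m + b x, c m + d x) := by
    intro m x
    have h1 : ((m, x) : M × B) = (m, 0) + (0, x) := by simp
    rw [h1, map_add]
    rfl
  let aE := LinearEquiv.ofBijective a ha
  set s := d - c.comp (aE.symm.toLinearMap.comp b) with hs_def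
  have hsx : ∀ x : B, s x = d x - c (aE.symm (b x)) := fun x => rfl
  have haE : ∀ m : M, aE m = a m := fun m => rfl
  have hinj : Function.Injective s := by
    have h0 : ∀ x : B, s x = 0 → x = 0 := by
      intro x hx
      have h2 : e (-(aE.symm (b x)), x) = 0 := by
        rw [he]
        have e1 : a (-(aE.symm (b x))) = -(b x) := by
          rw [map_neg]
          exact congrArg Neg.neg (aE.apply_symm_apply (b x))
        have e2 : c (-(aE.symm (b x))) = -(c (aE.symm (b x))) := map_neg _ _
        rw [e1, e2]
        have := hsx x
        rw [hx] at this
        have h3 : d x = c (aE.symm (b x)) := sub_eq_zero.mp this.symm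
        rw [h3]
        simp
      have h4 := e.map_eq_zero_iff.mp h2
      exact congrArg Prod.snd h4
    intro x y hxy
    have : s (x - y) = 0 := by rw [map_sub, hxy, sub_self]
    have := h0 _ this
    exact sub_eq_zero.mp this
  have hsurj : Function.Surjective s := by
    intro y
    obtain ⟨⟨m, x⟩, hmx⟩ := e.surjective ((0 : M'), y)
    rw [he] at hmx
    have h1 : a m + b x = 0 := congrArg Prod.fst hmx
    have h2 : c m + d x = y := congrArg Prod.snd hmx
    have hm : m = -(aE.symm (b x)) := by
      apply aE.injective
      rw [map_neg, haE, aE.apply_symm_apply]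
      rw [eq_neg_iff_add_eq_zero]
      exact h1
    refine ⟨x, ?_⟩
    rw [hsx]
    rw [hm, map_neg] at h2
    rw [← h2]
    abel
  exact ⟨LinearEquiv.ofBijective s ⟨hinj, hsurj⟩⟩

/-- For indecomposable finite-dimensional `M`, every endomorphism or its complement is bijective. -/
lemma bij_or_bij_sub (K : Type u) {A : Type u} [Field K] [Ring A] [Algebra K A]
    {M : Type u} [AddCommGroup M] [Module A M] [Module K M] [IsScalarTower K A M]
    [FiniteDimensional K M] (hM : Nontrivial M)
    (hind : ∀ p q : Submodule A M, IsCompl p q → p = ⊥ ∨ q = ⊥)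
    (u : M →ₗ[A] M) :
    Function.Bijective u ∨ Function.Bijective (LinearMap.id (R := A) (M := M) - u) := by
  haveI : IsNoetherian A M := isNoetherian_of_tower K inferInstance
  haveI : IsArtinian A M := isArtinian_of_tower K inferInstance
  obtain ⟨m, hmc, hm1⟩ :=
    ((u.eventually_isCompl_ker_pow_range_pow).and (Filter.eventually_ge_atTop 1)).exists
  rcases hind _ _ hmc with hk | hr
  · left
    have hminj : Function.Injective (u ^ m) := by
      rw [← LinearMap.ker_eq_bot]; exact hk
    obtain ⟨k, rfl⟩ : ∃ k, m = k + 1 := ⟨m - 1, (Nat.succ_pred_eq_of_pos hm1).symm⟩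
    have hinj : Function.Injective u := by
      intro x y hxy
      apply hminj
      rw [pow_succ]
      show (u ^ k) (u x) = (u ^ k) (u y)
      rw [hxy]
    have hsurj : Function.Surjective u := by
      have : Function.Injective (u.restrictScalars K) := hinj
      exact LinearMap.injective_iff_surjective.mp this
    exact ⟨hinj, hsurj⟩
  · right
    have hpow : u ^ m = 0 := by
      rw [← LinearMap.range_eq_bot]; exact hr
    have hnil : IsNilpotent (u : Module.End A M) := ⟨m, hpow⟩
    have hunit : IsUnit ((1 : Module.End A M) - u) := IsNilpotent.isUnit_one_sub hnil
    have := (Module.End.isUnit_iff _).mp hunit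
    exact this


lemma fd_submodule (K : Type u) {A : Type u} [Field K] [Ring A] [Algebra K A]
    {M : Type u} [AddCommGroup M] [Module A M] [Module K M] [IsScalarTower K A M]
    [FiniteDimensional K M] (p : Submodule A M) : FiniteDimensional K ↥p :=
  FiniteDimensional.of_injective ((p.subtype).restrictScalars K) p.injective_subtype

set_option maxHeartbeats 1000000 in
lemma cancel_aux (K : Type u) {A : Type u} [Field K] [Ring A] [Algebra K A] (n : ℕ) :
    ∀ (M B C : Type u) [AddCommGroup M] [Module A M] [Module K M] [IsScalarTower K A M]
      [FiniteDimensional K M] [AddCommGroup B] [Module A B] [AddCommGroup C] [Module A C],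
      finrank K M ≤ n → ((M × B) ≃ₗ[A] (M × C)) → Nonempty (B ≃ₗ[A] C) := by
  induction n with
  | zero =>
    intro M B C _ _ _ _ _ _ _ _ _ hle e
    haveI : Subsingleton M := by
      rw [← finrank_zero_iff (R := K)]
      omega
    have zB : (M × B) ≃ₗ[A] B :=
      LinearEquiv.ofLinear (LinearMap.snd A M B) (LinearMap.prod 0 LinearMap.id)
        (by apply LinearMap.ext; intro x; rfl)
        (by apply LinearMap.ext; intro x; exact Prod.ext (Subsingleton.elim _ _) rfl)
    have zC : (M × C) ≃ₗ[A] C :=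
      LinearEquiv.ofLinear (LinearMap.snd A M C) (LinearMap.prod 0 LinearMap.id)
        (by apply LinearMap.ext; intro x; rfl)
        (by apply LinearMap.ext; intro x; exact Prod.ext (Subsingleton.elim _ _) rfl)
    exact ⟨(zB.symm.trans e).trans zC⟩
  | succ n ih =>
    intro M B C _ _ _ _ _ _ _ _ _ hle e
    by_cases h0 : finrank K M ≤ n
    · exact ih M B C h0 e
    haveI hMnt : Nontrivial M := by
      rw [← finrank_pos_iff (R := K)]
      omega
    by_cases hdec : ∃ p q : Submodule A M, IsCompl p q ∧ p ≠ ⊥ ∧ q ≠ ⊥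
    · obtain ⟨p, q, hpq, hp, hq⟩ := hdec
      haveI := fd_submodule K (A := A) p
      haveI := fd_submodule K (A := A) q
      have epq : (↥p × ↥q) ≃ₗ[A] M := Submodule.prodEquivOfIsCompl p q hpq
      have hfr : finrank K (↥p × ↥q) = finrank K M :=
        (epq.restrictScalars K).finrank_eq
      rw [finrank_prod] at hfr
      have hppos : 0 < finrank K ↥p := by
        rw [finrank_pos_iff (R := K)]
        exact (Submodule.nontrivial_iff_ne_bot).mpr hp
      have hqpos : 0 < finrank K ↥q := by
        rw [finrank_pos_iff (R := K)]
        exact (Submodule.nontrivial_iff_ne_bot).mpr hq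
      have hple : finrank K ↥p ≤ n := by omega
      have hqle : finrank K ↥q ≤ n := by omega
      have e' : (↥p × (↥q × B)) ≃ₗ[A] (↥p × (↥q × C)) :=
        ((((LinearEquiv.prodAssoc A ↥p ↥q B).symm.trans
          (epq.prodCongr (LinearEquiv.refl A B))).trans e).trans
          ((epq.symm.prodCongr (LinearEquiv.refl A C)).trans (LinearEquiv.prodAssoc A ↥p ↥q C)))
      obtain ⟨e''⟩ := ih ↥p (↥q × B) (↥q × C) hple e'
      exact ih ↥q B C hqle e''
    · have hind : ∀ p q : Submodule A M, IsCompl p q → p = ⊥ ∨ q = ⊥ := by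
        intro p q hpq
        by_cases hp : p = ⊥
        · exact Or.inl hp
        · right
          by_contra hq
          exact hdec ⟨p, q, hpq, hp, hq⟩
      set a := (LinearMap.fst A M C).comp (e.toLinearMap.comp (LinearMap.inl A M B)) with ha_def
      set c := (LinearMap.snd A M C).comp (e.toLinearMap.comp (LinearMap.inl A M B)) with hc_def
      set a' := (LinearMap.fst A M B).comp (e.symm.toLinearMap.comp (LinearMap.inl A M C)) with ha'_def
      set b' := (LinearMap.fst A M B).comp (e.symm.toLinearMap.comp (LinearMap.inr A M C)) with hb'_def
      have hiden : ∀ m : M, a' (a m) + b' (c m) = m := by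
        intro m
        have h0 : e.symm (e (m, (0 : B))) = (m, 0) := e.symm_apply_apply _
        have h1 : e (m, (0 : B)) = (a m, c m) := rfl
        have h2 : ((a m, c m) : M × C) = (a m, 0) + (0, c m) := by simp
        have h3 : e.symm ((a m, 0) : M × C) + e.symm ((0, c m) : M × C) = (m, 0) := by
          rw [← map_add, ← h2, ← h1, h0]
        exact congrArg Prod.fst h3
      rcases bij_or_bij_sub K hMnt hind (a'.comp a) with hu | hu
      · -- a is injective, hence bijective; apply Schur directly
        have hainj : Function.Injective a := by
          intro x y hxy
          apply hu.1
          show a' (a x) = a' (a y)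
          rw [hxy]
        have hasurj : Function.Surjective a := by
          have : Function.Injective (a.restrictScalars K) := hainj
          exact LinearMap.injective_iff_surjective.mp this
        exact schur_cancel e ⟨hainj, hasurj⟩
      · -- b' ∘ c is bijective
        have hbc : (LinearMap.id (R := A) (M := M) - a'.comp a) = b'.comp c := by
          apply LinearMap.ext; intro m
          show m - a' (a m) = b' (c m)
          rw [sub_eq_iff_eq_add, add_comm]
          exact (hiden m).symm
        rw [hbc] at hu
        set v := b'.comp c with hv_def
        let vE := LinearEquiv.ofBijective v hu
        set δ := vE.symm.toLinearMap.comp b' with hδ_def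
        have hδc : ∀ m : M, δ (c m) = m := by
          intro m
          show vE.symm (b' (c m)) = m
          have h5 : b' (c m) = vE m := rfl
          rw [h5, vE.symm_apply_apply]
        set D := LinearMap.ker δ with hD_def
        have hmemD : ∀ y : C, (LinearMap.id (R := A) (M := C) - c.comp δ) y ∈ D := by
          intro y
          show δ (y - c (δ y)) = 0
          rw [map_sub, hδc, sub_self]
        let fwd : C →ₗ[A] M × ↥D :=
          LinearMap.prod δ (LinearMap.codRestrict D (LinearMap.id - c.comp δ) hmemD)
        let bwd : (M × ↥D) →ₗ[A] C :=
          c.comp (LinearMap.fst A M ↥D) + (D.subtype).comp (LinearMap.snd A M ↥D)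
        have hfb : fwd.comp bwd = LinearMap.id := by
          apply LinearMap.ext; rintro ⟨m, z⟩
          have hz : δ (z : C) = 0 := z.2
          apply Prod.ext
          · show δ (c m + ↑z) = m
            rw [map_add, hδc, hz, add_zero]
          · apply Subtype.ext
            show (c m + ↑z) - c (δ (c m + ↑z)) = (z : C)
            rw [map_add, hδc, hz, add_zero, add_sub_cancel_left]
        have hbf : bwd.comp fwd = LinearMap.id := by
          apply LinearMap.ext; intro y
          show c (δ y) + (y - c (δ y)) = y
          abel
        let g₂ : C ≃ₗ[A] (M × ↥D) := LinearEquiv.ofLinear fwd bwd hfb hbf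
        let e2 : (M × B) ≃ₗ[A] (M × (M × ↥D)) := e.trans ((LinearEquiv.refl A M).prodCongr g₂)
        let sw : (M × (M × ↥D)) →ₗ[A] (M × (M × ↥D)) :=
          LinearMap.prod ((LinearMap.fst A M ↥D).comp (LinearMap.snd A M (M × ↥D)))
            (LinearMap.prod (LinearMap.fst A M (M × ↥D))
              ((LinearMap.snd A M ↥D).comp (LinearMap.snd A M (M × ↥D))))
        have hsw : sw.comp sw = LinearMap.id := by apply LinearMap.ext; intro x; rfl
        let σ : (M × (M × ↥D)) ≃ₗ[A] (M × (M × ↥D)) := LinearEquiv.ofLinear sw sw hsw hsw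
        let e3 : (M × B) ≃ₗ[A] (M × (M × ↥D)) := e2.trans σ
        have ha3 : Function.Bijective ((LinearMap.fst A M (M × ↥D)).comp
            (e3.toLinearMap.comp (LinearMap.inl A M B))) := by
          have hc3 : ((LinearMap.fst A M (M × ↥D)).comp
              (e3.toLinearMap.comp (LinearMap.inl A M B))) = LinearMap.id := by
            apply LinearMap.ext; intro m
            show δ (c m) = m
            exact hδc m
          rw [hc3]
          exact Function.bijective_id
        obtain ⟨eBD⟩ := schur_cancel e3 ha3
        exact ⟨eBD.trans g₂.symm⟩

/-- Cancellation: `M × B ≃ M × C` implies `B ≃ C` for `M` finite-dimensional. -/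
lemma cancel_prod (K : Type u) {A : Type u} [Field K] [Ring A] [Algebra K A]
    (M B C : Type u) [AddCommGroup M] [Module A M] [Module K M] [IsScalarTower K A M]
    [FiniteDimensional K M] [AddCommGroup B] [Module A B] [AddCommGroup C] [Module A C]
    (e : (M × B) ≃ₗ[A] (M × C)) : Nonempty (B ≃ₗ[A] C) :=
  cancel_aux K (finrank K M) M B C le_rfl e

end Cancellation

section ExtVanish
variable (K A : Type u) [Field K] [Ring A] [Algebra K A]

/-- If `Ext¹(X,Y)` is trivial, every 1-cocycle on a projective resolution is a coboundary. -/
lemma coboundary {X Y : ModuleCat.{u} A} (hsub : Subsingleton (ext1 K A X Y))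
    (P : ProjectiveResolution X) (h : P.complex.X 1 ⟶ Y)
    (hc : P.complex.d 2 1 ≫ h = 0) :
    ∃ H : P.complex.X 0 ⟶ Y, P.complex.d 1 0 ≫ H = h := by
  set C := P.complex.linearYonedaObj K Y with hC
  have hiso := P.isoExt (R := K) 1 Y
  haveI : Subsingleton ((((Ext K (ModuleCat.{u} A) 1).obj (op X)).obj Y) : Type u) := hsub
  haveI : Subsingleton ((C.homology 1) : Type u) :=
    Equiv.subsingleton hiso.symm.toLinearEquiv.toEquiv
  have hz : Limits.IsZero (C.homology 1) := ModuleCat.isZero_of_subsingleton _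
  have hex : C.ExactAt 1 := (HomologicalComplex.exactAt_iff_isZero_homology C 1).mpr hz
  rw [C.exactAt_iff' 0 1 2 (by simp) (by simp)] at hex
  rw [ShortComplex.moduleCat_exact_iff] at hex
  have hmem : (C.sc' 0 1 2).g h = 0 := by
    show (Linear.leftComp K Y (P.complex.d 2 1)) h = 0
    simpa using hc
  obtain ⟨H, hH⟩ := hex h hmem
  refine ⟨H, ?_⟩
  have : (Linear.leftComp K Y (P.complex.d 1 0)) H = h := hH
  exact this
end ExtVanish

section LiftExtend
variable {K A : Type u} [Field K] [Ring A] [Algebra K A]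

/-- If `Ext¹(T, Y) = 0`, any map `T → Z` lifts along the epimorphism `E → Z` of a
short exact sequence `0 → Y → E → Z → 0`. -/
lemma lift_of_ext_vanish {Y E Z T : ModuleCat.{u} A}
    (g : Y ⟶ E) (f : E ⟶ Z) (w : g ≫ f = 0)
    (hse : (ShortComplex.mk g f w).ShortExact)
    (hsub : Subsingleton (ext1 K A T Y)) (φ : T ⟶ Z) :
    ∃ ψ : T ⟶ E, ψ ≫ f = φ := by
  haveI := hse.mono_f
  haveI := hse.epi_g
  obtain ⟨P⟩ : Nonempty (ProjectiveResolution T) := ⟨ProjectiveResolution.of T⟩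
  set lam := Projective.factorThru (P.π.f 0 ≫ φ) f with hlam
  have hlamf : lam ≫ f = P.π.f 0 ≫ φ := Projective.factorThru_comp _ _
  have hd1 : (P.complex.d 1 0 ≫ lam) ≫ f = 0 := by
    rw [Category.assoc, hlamf]
    exact (Category.assoc _ _ _).symm.trans (by rw [P.complex_d_comp_π_f_zero]; exact zero_comp)
  set h : P.complex.X 1 ⟶ Y := hse.exact.lift (P.complex.d 1 0 ≫ lam) hd1 with hh
  have hhg : h ≫ g = P.complex.d 1 0 ≫ lam := hse.exact.lift_f _ _
  have hcoc : P.complex.d 2 1 ≫ h = 0 := by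
    rw [← cancel_mono g, Category.assoc, hhg, zero_comp, ← Category.assoc,
      HomologicalComplex.d_comp_d, zero_comp]
  obtain ⟨H, hH⟩ := coboundary K A hsub P h hcoc
  have hfac : P.complex.d 1 0 ≫ (lam - H ≫ g) = 0 := by
    rw [Preadditive.comp_sub, ← Category.assoc, hH, hhg, sub_self]
  set ψ := P.exact₀.desc (lam - H ≫ g) hfac with hψ
  have hπψ : P.π.f 0 ≫ ψ = lam - H ≫ g := P.exact₀.g_desc _ _
  refine ⟨ψ, ?_⟩
  have : Epi (P.π.f 0) := inferInstance
  apply (cancel_epi (P.π.f 0)).mp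
  exact (Category.assoc _ _ _).symm.trans (by rw [hπψ, Preadditive.sub_comp, Category.assoc, w,
    comp_zero, sub_zero, hlamf])

/-- If `Ext¹(Z, T) = 0`, any map `Y → T` extends along the monomorphism `Y → E` of a
short exact sequence `0 → Y → E → Z → 0`. -/
lemma extend_of_ext_vanish {Y E Z T : ModuleCat.{u} A}
    (g : Y ⟶ E) (f : E ⟶ Z) (w : g ≫ f = 0)
    (hse : (ShortComplex.mk g f w).ShortExact)
    (hsub : Subsingleton (ext1 K A Z T)) (φ : Y ⟶ T) :
    ∃ ψ : E ⟶ T, g ≫ ψ = φ := by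
  haveI := hse.mono_f
  haveI : Epi f := hse.epi_g
  obtain ⟨P⟩ : Nonempty (ProjectiveResolution Z) := ⟨ProjectiveResolution.of Z⟩
  set lam := Projective.factorThru (X := Z) (P.π.f 0) f with hlam
  have hlamf : lam ≫ f = P.π.f 0 := Projective.factorThru_comp _ _
  have hd1 : (P.complex.d 1 0 ≫ lam) ≫ f = 0 := by
    rw [Category.assoc, hlamf]
    exact P.complex_d_comp_π_f_zero
  set μ : P.complex.X 1 ⟶ Y := hse.exact.lift (P.complex.d 1 0 ≫ lam) hd1 with hμ
  have hμg : μ ≫ g = P.complex.d 1 0 ≫ lam := hse.exact.lift_f _ _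
  have hcoc : P.complex.d 2 1 ≫ (μ ≫ φ) = 0 := by
    have h1 : P.complex.d 2 1 ≫ μ = 0 := by
      rw [← cancel_mono g, Category.assoc, hμg, zero_comp, ← Category.assoc,
        HomologicalComplex.d_comp_d, zero_comp]
    rw [← Category.assoc, h1, zero_comp]
  obtain ⟨H, hH⟩ := coboundary K A hsub P (μ ≫ φ) hcoc
  -- now construct ψ : E ⟶ T concretely
  have hginj : Function.Injective g := (ModuleCat.mono_iff_injective g).mp hse.mono_f
  have hfsurj : Function.Surjective f := (ModuleCat.epi_iff_surjective f).mp hse.epi_g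
  have hexact := (ShortComplex.moduleCat_exact_iff _).mp hse.exact
  have hexact₀ := (ShortComplex.moduleCat_exact_iff _).mp P.exact₀
  set Φ : (↑Y × ↑(P.complex.X 0)) →ₗ[A] ↑E := LinearMap.coprod (g.hom : ↑Y →ₗ[A] ↑E) (lam.hom : _ →ₗ[A] _) with hΦ
  set Ψ : (↑Y × ↑(P.complex.X 0)) →ₗ[A] ↑T := LinearMap.coprod (φ.hom : ↑Y →ₗ[A] ↑T) (H.hom : _ →ₗ[A] _) with hΨ
  have hΦsurj : Function.Surjective Φ := by
    intro e'
    obtain ⟨p, hp⟩ := (ModuleCat.epi_iff_surjective (P.π.f 0)).mp inferInstance (f e')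
    have hlf : f (lam p) = (P.π.f 0) p := ConcreteCategory.congr_hom hlamf p
    have hfe : f (e' - lam p) = 0 := by
      rw [map_sub, hlf, hp, sub_self]
    obtain ⟨y, hy⟩ := hexact _ hfe
    refine ⟨(y, p), ?_⟩
    show g y + lam p = e'
    rw [hy]
    abel
  have hker : LinearMap.ker Φ ≤ LinearMap.ker Ψ := by
    rintro ⟨y, p⟩ hv
    have hv' : g y + lam p = 0 := hv
    have hπp : (P.π.f 0) p = 0 := by
      have h1 : f (g y) = 0 := by
        have := ConcreteCategory.congr_hom w y
        simpa using this
      have h2 : f (g y + lam p) = 0 := by rw [hv']; simp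
      rw [map_add, h1, zero_add] at h2
      have hlf2 : f (lam p) = (P.π.f 0) p := ConcreteCategory.congr_hom hlamf p
      rw [hlf2] at h2
      exact h2
    obtain ⟨q, hq⟩ := hexact₀ _ hπp
    have hgl : g (μ q) = lam p := by
      have h3 : g (μ q) = lam (P.complex.d 1 0 q) := ConcreteCategory.congr_hom hμg q
      rw [hq] at h3
      exact h3
    have hym : y = -(μ q) := by
      apply hginj
      rw [map_neg, hgl, eq_neg_iff_add_eq_zero]
      exact hv'
    show φ y + H p = 0
    have hHd : H (P.complex.d 1 0 q) = φ (μ q) := ConcreteCategory.congr_hom hH q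
    rw [hym, ← hq, hHd, map_neg, neg_add_cancel]
  set qke := LinearMap.quotKerEquivOfSurjective Φ hΦsurj with hqke
  set ψlin : (↑E : Type u) →ₗ[A] ↑T :=
    (Submodule.liftQ (LinearMap.ker Φ) Ψ hker).comp qke.symm.toLinearMap with hψlin
  have hψΦ : ∀ v, ψlin (Φ v) = Ψ v := by
    intro v
    have h1 : qke.symm (Φ v) = Submodule.Quotient.mk v := by
      rw [LinearEquiv.symm_apply_eq]
      rfl
    show (Submodule.liftQ (LinearMap.ker Φ) Ψ hker) (qke.symm (Φ v)) = Ψ v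
    rw [h1, Submodule.liftQ_apply]
  refine ⟨ModuleCat.ofHom ψlin, ?_⟩
  apply ModuleCat.hom_ext
  apply LinearMap.ext
  intro y
  have h0 : Φ (y, 0) = g y := by
    show g y + lam 0 = g y
    rw [map_zero, add_zero]
  show ψlin (g y) = φ y
  rw [← h0, hψΦ]
  show φ y + H 0 = φ y
  rw [map_zero, add_zero]
end LiftExtend

section Dim

variable (K : Type u) {A : Type u} [Field K] [Ring A] [Algebra K A]

/-- The hom `K`-module embeds into the space of `K`-linear maps. -/
noncomputable def homEmbed (M N : ModuleCat.{u} A) :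
    (M ⟶ N) →ₗ[K] (((ModuleCat.restrictScalars (algebraMap K A)).obj M) ⟶
      ((ModuleCat.restrictScalars (algebraMap K A)).obj N)) where
  toFun f := (ModuleCat.restrictScalars (algebraMap K A)).map f
  map_add' f g := ModuleCat.hom_ext (LinearMap.ext fun _ => rfl)
  map_smul' k f := ModuleCat.hom_ext (LinearMap.ext fun _ => rfl)

lemma homEmbed_injective (M N : ModuleCat.{u} A) : Function.Injective (homEmbed K M N) :=
  fun f g h => ModuleCat.hom_ext (LinearMap.ext fun x => congrArg (fun φ => φ.hom x) h)

lemma homFD (M N : ModuleCat.{u} A)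
    [FiniteDimensional K ((ModuleCat.restrictScalars (algebraMap K A)).obj M)]
    [FiniteDimensional K ((ModuleCat.restrictScalars (algebraMap K A)).obj N)] :
    FiniteDimensional K (M ⟶ N) := by
  haveI : FiniteDimensional K (((ModuleCat.restrictScalars (algebraMap K A)).obj M) ⟶
      ((ModuleCat.restrictScalars (algebraMap K A)).obj N)) :=
    Module.Finite.equiv ModuleCat.homLinearEquiv.symm
  exact FiniteDimensional.of_injective (homEmbed K M N) (homEmbed_injective K M N)

lemma ker_rightComp (T : ModuleCat.{u} A) {Y E Z : ModuleCat.{u} A}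
    (g : Y ⟶ E) (f : E ⟶ Z) (w : g ≫ f = 0)
    (hse : (ShortComplex.mk g f w).ShortExact) :
    LinearMap.ker (Linear.rightComp K T f) = LinearMap.range (Linear.rightComp K T g) := by
  haveI := hse.mono_f
  apply le_antisymm
  · intro φ hφ
    have hφ' : φ ≫ f = 0 := LinearMap.mem_ker.mp hφ
    exact ⟨hse.exact.lift φ hφ', hse.exact.lift_f φ hφ'⟩
  · rintro _ ⟨u, rfl⟩
    rw [LinearMap.mem_ker]
    show (u ≫ g) ≫ f = 0
    rw [Category.assoc, w, comp_zero]

lemma ker_leftComp (T : ModuleCat.{u} A) {Y E Z : ModuleCat.{u} A}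
    (g : Y ⟶ E) (f : E ⟶ Z) (w : g ≫ f = 0)
    (hse : (ShortComplex.mk g f w).ShortExact) :
    LinearMap.ker (Linear.leftComp K T g) = LinearMap.range (Linear.leftComp K T f) := by
  haveI := hse.epi_g
  apply le_antisymm
  · intro φ hφ
    have hφ' : g ≫ φ = 0 := LinearMap.mem_ker.mp hφ
    exact ⟨hse.exact.desc φ hφ', hse.exact.g_desc φ hφ'⟩
  · rintro _ ⟨u, rfl⟩
    rw [LinearMap.mem_ker]
    show g ≫ (f ≫ u) = 0
    rw [← Category.assoc, w, zero_comp]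

lemma finrank_hom_middle (T : ModuleCat.{u} A) {Y E Z : ModuleCat.{u} A}
    (g : Y ⟶ E) (f : E ⟶ Z) (w : g ≫ f = 0)
    (hse : (ShortComplex.mk g f w).ShortExact)
    [FiniteDimensional K (T ⟶ E)] [FiniteDimensional K (T ⟶ Y)]
    (hsurj : Function.Surjective (Linear.rightComp K T f)) :
    finrank K (T ⟶ E) = finrank K (T ⟶ Y) + finrank K (T ⟶ Z) := by
  haveI := hse.mono_f
  have h1 := LinearMap.finrank_range_add_finrank_ker (Linear.rightComp K T f)
  rw [LinearMap.range_eq_top.mpr hsurj, finrank_top, ker_rightComp K T g f w hse] at h1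
  have hinj : Function.Injective (Linear.rightComp K T g) := by
    intro u v huv
    exact (cancel_mono g).mp huv
  have h2 : finrank K (T ⟶ Y) = finrank K (LinearMap.range (Linear.rightComp K T g)) :=
    (LinearEquiv.ofInjective _ hinj).finrank_eq
  omega

lemma finrank_hom_middle' (T : ModuleCat.{u} A) {Y E Z : ModuleCat.{u} A}
    (g : Y ⟶ E) (f : E ⟶ Z) (w : g ≫ f = 0)
    (hse : (ShortComplex.mk g f w).ShortExact)
    [FiniteDimensional K (E ⟶ T)] [FiniteDimensional K (Z ⟶ T)]
    (hsurj : Function.Surjective (Linear.leftComp K T g)) :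
    finrank K (E ⟶ T) = finrank K (Y ⟶ T) + finrank K (Z ⟶ T) := by
  haveI := hse.epi_g
  have h1 := LinearMap.finrank_range_add_finrank_ker (Linear.leftComp K T g)
  rw [LinearMap.range_eq_top.mpr hsurj, finrank_top, ker_leftComp K T g f w hse] at h1
  have hinj : Function.Injective (Linear.leftComp K T f) := by
    intro u v huv
    exact (cancel_epi f).mp huv
  have h2 : finrank K (Z ⟶ T) = finrank K (LinearMap.range (Linear.leftComp K T f)) :=
    (LinearEquiv.ofInjective _ hinj).finrank_eq
  omega

end Dim

theorem stmt0 (K A : Type u) [Field K] [Ring A] [Algebra K A]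
    (x x₁ x₂ x₃ : ModuleCat.{u} A)
    -- all modules are finite-dimensional over K
    [FiniteDimensional K ((ModuleCat.restrictScalars (algebraMap K A)).obj x)]
    [FiniteDimensional K ((ModuleCat.restrictScalars (algebraMap K A)).obj x₁)]
    [FiniteDimensional K ((ModuleCat.restrictScalars (algebraMap K A)).obj x₂)]
    [FiniteDimensional K ((ModuleCat.restrictScalars (algebraMap K A)).obj x₃)]
    -- the two short exact sequences with common middle term x
    (i₁ : x₂ ⟶ x) (p₁ : x ⟶ x₁) (w₁ : i₁ ≫ p₁ = 0)
    (hse₁ : (ShortComplex.mk i₁ p₁ w₁).ShortExact)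
    (i₂ : x₁ ⟶ x) (p₂ : x ⟶ x₃) (w₂ : i₂ ≫ p₂ = 0)
    (hse₂ : (ShortComplex.mk i₂ p₂ w₂).ShortExact)
    -- x₁ is rigid
    (hrigid : Subsingleton (ext1 K A x₁ x₁))
    -- the dimension hypotheses on Hom spaces
    (hdim₁ : Module.finrank K (x₁ ⟶ x₂) = Module.finrank K (x₁ ⟶ x₃))
    (hdim₂ : Module.finrank K (x₂ ⟶ x₁) = Module.finrank K (x₃ ⟶ x₁)) :
    Nonempty (ShortComplex.mk i₁ p₁ w₁).Splitting ∧
      Nonempty (ShortComplex.mk i₂ p₂ w₂).Splitting ∧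
      Nonempty (x₃ ≅ x₂) := by
  haveI := homFD K x₁ x
  haveI := homFD K x₁ x₁
  haveI := homFD K x₁ x₂
  haveI := homFD K x₁ x₃
  haveI := homFD K x x₁
  haveI := homFD K x₂ x₁
  haveI := homFD K x₃ x₁
  -- Splitting of the first sequence
  have hsurj₂ : Function.Surjective (Linear.rightComp K x₁ p₂) := by
    intro φ
    obtain ⟨ψ, hψ⟩ := lift_of_ext_vanish (K := K) i₂ p₂ w₂ hse₂ hrigid φ
    exact ⟨ψ, hψ⟩
  have hmid : finrank K (x₁ ⟶ x) = finrank K (x₁ ⟶ x₁) + finrank K (x₁ ⟶ x₃) :=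
    finrank_hom_middle K x₁ i₂ p₂ w₂ hse₂ hsurj₂
  have hrn := LinearMap.finrank_range_add_finrank_ker (Linear.rightComp K x₁ p₁)
  rw [ker_rightComp K x₁ i₁ p₁ w₁ hse₁] at hrn
  have hinj₁ : Function.Injective (Linear.rightComp K x₁ i₁) := by
    haveI := hse₁.mono_f
    intro u v huv
    exact (cancel_mono i₁).mp huv
  have hkerdim : finrank K (x₁ ⟶ x₂) =
      finrank K (LinearMap.range (Linear.rightComp K x₁ i₁)) :=
    (LinearEquiv.ofInjective _ hinj₁).finrank_eq
  have hrangedim : finrank K (LinearMap.range (Linear.rightComp K x₁ p₁)) =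
      finrank K (x₁ ⟶ x₁) := by omega
  have hrange : LinearMap.range (Linear.rightComp K x₁ p₁) = ⊤ :=
    Submodule.eq_top_of_finrank_eq hrangedim
  obtain ⟨s, hs⟩ : ∃ s : x₁ ⟶ x, s ≫ p₁ = 𝟙 x₁ := by
    have : (𝟙 x₁) ∈ LinearMap.range (Linear.rightComp K x₁ p₁) := by
      rw [hrange]; trivial
    obtain ⟨s, hs⟩ := this
    exact ⟨s, hs⟩
  have sp₁ : (ShortComplex.mk i₁ p₁ w₁).Splitting :=
    ShortComplex.Splitting.ofExactOfSection _ hse₁.exact s hs hse₁.mono_f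
  -- Splitting of the second sequence
  have hsurj₁' : Function.Surjective (Linear.leftComp K x₁ i₁) := by
    intro φ
    obtain ⟨ψ, hψ⟩ := extend_of_ext_vanish (K := K) i₁ p₁ w₁ hse₁ hrigid φ
    exact ⟨ψ, hψ⟩
  have hmid' : finrank K (x ⟶ x₁) = finrank K (x₂ ⟶ x₁) + finrank K (x₁ ⟶ x₁) :=
    finrank_hom_middle' K x₁ i₁ p₁ w₁ hse₁ hsurj₁'
  have hrn' := LinearMap.finrank_range_add_finrank_ker (Linear.leftComp K x₁ i₂)
  rw [ker_leftComp K x₁ i₂ p₂ w₂ hse₂] at hrn'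
  have hinj₂ : Function.Injective (Linear.leftComp K x₁ p₂) := by
    haveI := hse₂.epi_g
    intro u v huv
    exact (cancel_epi p₂).mp huv
  have hkerdim' : finrank K (x₃ ⟶ x₁) =
      finrank K (LinearMap.range (Linear.leftComp K x₁ p₂)) :=
    (LinearEquiv.ofInjective _ hinj₂).finrank_eq
  have hrangedim' : finrank K (LinearMap.range (Linear.leftComp K x₁ i₂)) =
      finrank K (x₁ ⟶ x₁) := by omega
  have hrange' : LinearMap.range (Linear.leftComp K x₁ i₂) = ⊤ :=
    Submodule.eq_top_of_finrank_eq hrangedim'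
  obtain ⟨r, hr⟩ : ∃ r : x ⟶ x₁, i₂ ≫ r = 𝟙 x₁ := by
    have : (𝟙 x₁) ∈ LinearMap.range (Linear.leftComp K x₁ i₂) := by
      rw [hrange']; trivial
    obtain ⟨r, hr⟩ := this
    exact ⟨r, hr⟩
  have sp₂ : (ShortComplex.mk i₂ p₂ w₂).Splitting :=
    ShortComplex.Splitting.ofExactOfRetraction _ hse₂.exact r hr hse₂.epi_g
  -- The isomorphism x₃ ≅ x₂, by cancellation
  have lin₁ : (↑x : Type u) ≃ₗ[A] (↑x₂ × ↑x₁) :=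
    (sp₁.isoBinaryBiproduct ≪≫ ModuleCat.biprodIsoProd x₂ x₁).toLinearEquiv
  have lin₂ : (↑x : Type u) ≃ₗ[A] (↑x₁ × ↑x₃) :=
    (sp₂.isoBinaryBiproduct ≪≫ ModuleCat.biprodIsoProd x₁ x₃).toLinearEquiv
  have E : ((↑x₁ : Type u) × ↑x₂) ≃ₗ[A] ((↑x₁ : Type u) × ↑x₃) :=
    (LinearEquiv.prodComm A ↑x₁ ↑x₂).trans (lin₁.symm.trans lin₂)
  letI : Module K (↑x₁ : Type u) := ModuleCat.moduleOfAlgebraModule (k := K) x₁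
  haveI : IsScalarTower K A (↑x₁ : Type u) := ModuleCat.isScalarTower_of_algebra_moduleCat (k := K) x₁
  haveI : FiniteDimensional K (↑x₁ : Type u) :=
    ‹FiniteDimensional K ((ModuleCat.restrictScalars (algebraMap K A)).obj x₁)›
  obtain ⟨e23⟩ := cancel_prod K (↑x₁ : Type u) (↑x₂ : Type u) (↑x₃ : Type u) E
  refine ⟨⟨sp₁⟩, ⟨sp₂⟩, ⟨?_⟩⟩
  exact
    { hom := ModuleCat.ofHom (e23.symm.toLinearMap : (↑x₃ : Type u) →ₗ[A] ↑x₂)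
      inv := ModuleCat.ofHom (e23.toLinearMap : (↑x₂ : Type u) →ₗ[A] ↑x₃)
      hom_inv_id := by apply ModuleCat.hom_ext; apply LinearMap.ext; intro y; exact e23.apply_symm_apply y
      inv_hom_id := by apply ModuleCat.hom_ext; apply LinearMap.ext; intro y; exact e23.symm_apply_apply y }
end

section
/- Let 𝒞 be an abelian category, τ a left-exact additive endofunctor, and 𝒞̃ the category of pairs (M, σ : M → τM) as above. For objects M̃ = (M,σ), Ñ = (N,σ') of 𝒞̃ there is an exact sequence 0 → Hom_{𝒞̃}(M̃,Ñ) → Hom_𝒞(M,N) → Hom_𝒞(M,τN) → Ext¹_{𝒞̃}(M̃,Ñ) → Ext¹_𝒞(M,N), where the second map is f ↦ σ'f − τ(f)σ, the third sends g ∈ Hom_𝒞(M,τN) to the extension class of (N ⊕ M, [[σ', 0],[g, σ]]), and the last map is induced by the forgetful functor. -/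
/-!
STATEMENT 14: Let 𝒞 be an abelian category, τ a left-exact additive
endofunctor, and 𝒞̃ the category of pairs (M, σ : M → τM).  For objects
M̃ = (M,σ), Ñ = (N,σ') of 𝒞̃ there is an exact sequence
0 → Hom_{𝒞̃}(M̃,Ñ) → Hom_𝒞(M,N) → Hom_𝒞(M,τN) → Ext¹_{𝒞̃}(M̃,Ñ) → Ext¹_𝒞(M,N),
where the second map is f ↦ σ'f − τ(f)σ, the third sends g to the class of the
extension (N ⊕ M, [[σ',0],[g,σ]]), and the last is induced by the forgetful
functor.  We formulate exactness via extensions: (1) Hom_{𝒞̃} is the kernel of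
α⁰ : f ↦ σ'f − τ(f)σ; (2) the extension δ⁰(g) splits in 𝒞̃ iff g lies in the
image of α⁰; (3) an extension of M̃ by Ñ in 𝒞̃ splits in 𝒞 (i.e. dies in
Ext¹_𝒞(M,N)) iff it is isomorphic to some δ⁰(g).
-/

open CategoryTheory Limits

universe v u

variable {C : Type u} [Category.{v} C] [Abelian C]
variable (τ : C ⥤ C)

/-- The structure map `[[σ',0],[g,σ]] : N ⊞ M ⟶ τ(N ⊞ M)` of the extension
`δ⁰(g)`. -/
noncomputable def deltaSigma {M N : C} (σ : M ⟶ τ.obj M) (σ' : N ⟶ τ.obj N)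
    (g : M ⟶ τ.obj N) : N ⊞ M ⟶ τ.obj (N ⊞ M) :=
  biprod.desc (σ' ≫ τ.map biprod.inl)
    (g ≫ τ.map biprod.inl + σ ≫ τ.map biprod.inr)

/-- Since `τ` preserves finite limits, `τ.map biprod.fst` and `τ.map biprod.snd`
are jointly monic. -/
lemma tauBiprodExt [PreservesFiniteLimits τ] {A X Y : C}
    (a b : A ⟶ τ.obj (X ⊞ Y))
    (h1 : a ≫ τ.map biprod.fst = b ≫ τ.map biprod.fst)
    (h2 : a ≫ τ.map biprod.snd = b ≫ τ.map biprod.snd) : a = b := by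
  have := preservesBinaryBiproducts_of_preservesBinaryProducts τ
  have key : a ≫ (τ.mapBiprod X Y).hom = b ≫ (τ.mapBiprod X Y).hom := by
    apply biprod.hom_ext <;>
      (rw [Functor.mapBiprod_hom, Category.assoc, Category.assoc]; simp [h1, h2])
  exact (cancel_mono (τ.mapBiprod X Y).hom).1 key


lemma deltaSigma_fst [τ.Additive] [PreservesFiniteLimits τ] {M N : C}
    (σ : M ⟶ τ.obj M) (σ' : N ⟶ τ.obj N) (g : M ⟶ τ.obj N) :
    deltaSigma τ σ σ' g ≫ τ.map biprod.fst = biprod.desc σ' g := by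
  apply biprod.hom_ext' <;>
    simp [deltaSigma, Preadditive.add_comp, Category.assoc, ← τ.map_comp]

lemma deltaSigma_snd [τ.Additive] [PreservesFiniteLimits τ] {M N : C}
    (σ : M ⟶ τ.obj M) (σ' : N ⟶ τ.obj N) (g : M ⟶ τ.obj N) :
    deltaSigma τ σ σ' g ≫ τ.map biprod.snd = biprod.desc 0 σ := by
  apply biprod.hom_ext' <;>
    simp [deltaSigma, Preadditive.add_comp, Category.assoc, ← τ.map_comp]

theorem stmt14 [τ.Additive] [PreservesFiniteLimits τ]
    (M N : C) (σ : M ⟶ τ.obj M) (σ' : N ⟶ τ.obj N) :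
    -- (1) Hom_{𝒞̃}(M̃,Ñ) = Ker α⁰ inside Hom_𝒞(M,N)
    (∀ f : M ⟶ N, (σ ≫ τ.map f = f ≫ σ') ↔ f ≫ σ' - σ ≫ τ.map f = 0) ∧
    -- (2) exactness at Hom_𝒞(M,τN): δ⁰(g) splits in 𝒞̃ iff g ∈ Im α⁰
    (∀ g : M ⟶ τ.obj N,
      (∃ r : N ⊞ M ⟶ N,
          deltaSigma τ σ σ' g ≫ τ.map r = r ≫ σ' ∧ biprod.inl ≫ r = 𝟙 N) ↔
        ∃ f : M ⟶ N, f ≫ σ' - σ ≫ τ.map f = g) ∧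
    -- (3) exactness at Ext¹_{𝒞̃}(M̃,Ñ): an extension of M̃ by Ñ in 𝒞̃ becomes
    -- trivial in Ext¹_𝒞(M,N) iff it is isomorphic to some δ⁰(g)
    (∀ (E : C) (σE : E ⟶ τ.obj E) (i : N ⟶ E) (p : E ⟶ M)
        (hi : σ' ≫ τ.map i = i ≫ σE) (hp : σE ≫ τ.map p = p ≫ σ)
        (w : i ≫ p = 0), (ShortComplex.mk i p w).ShortExact →
      ((∃ r : E ⟶ N, i ≫ r = 𝟙 N) ↔
        ∃ (g : M ⟶ τ.obj N) (φ : E ≅ N ⊞ M),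
          σE ≫ τ.map φ.hom = φ.hom ≫ deltaSigma τ σ σ' g ∧
            i ≫ φ.hom = biprod.inl ∧ φ.hom ≫ biprod.snd = p)) := by
  refine ⟨?_, ?_, ?_⟩
  · intro f
    constructor
    · intro h; rw [← h, sub_self]
    · intro h; rw [← sub_eq_zero]; rw [← neg_sub] at h
      simpa using congrArg Neg.neg h
  · intro g
    constructor
    · rintro ⟨r, hr, hr1⟩
      refine ⟨biprod.inr ≫ r, ?_⟩
      have := congrArg (fun x => biprod.inr ≫ x) hr
      simp only [deltaSigma, biprod.inr_desc_assoc, Preadditive.add_comp,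
        Category.assoc, ← τ.map_comp, hr1, τ.map_id, Category.comp_id] at this
      -- this : g + σ ≫ τ.map (biprod.inr ≫ r) = biprod.inr ≫ r ≫ σ'
      rw [Category.assoc, ← this]
      abel
    · rintro ⟨f, hf⟩
      refine ⟨biprod.desc (𝟙 N) f, ?_, by simp⟩
      apply biprod.hom_ext'
      · simp [deltaSigma, ← τ.map_comp]
      · simp only [deltaSigma, biprod.inr_desc_assoc, Preadditive.add_comp,
          Category.assoc, ← τ.map_comp, biprod.inl_desc, biprod.inr_desc,
          τ.map_id, Category.comp_id, biprod.inr_desc_assoc]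
        rw [← hf]; abel
  · intro E σE i p hi hp w hSE
    constructor
    · rintro ⟨r, hr⟩
      have hepi : Epi (ShortComplex.mk i p w).g := hSE.epi_g
      have hepi' : Epi p := hepi
      have hexact := hSE.exact
      have he : (ShortComplex.mk i p w).f ≫ (𝟙 E - r ≫ i) = 0 := by
        show i ≫ (𝟙 E - r ≫ i) = 0
        rw [Preadditive.comp_sub, Category.comp_id, ← Category.assoc, hr,
          Category.id_comp, sub_self]
      obtain ⟨s, hps⟩ := hexact.desc' (𝟙 E - r ≫ i) he
      replace hps : p ≫ s = 𝟙 E - r ≫ i := hps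
      have hsp : s ≫ p = 𝟙 M := by
        rw [← cancel_epi p, ← Category.assoc, hps]
        simp [Preadditive.sub_comp, Category.assoc, w]
      have hsr : s ≫ r = 0 := by
        rw [← cancel_epi p, ← Category.assoc, hps]
        simp [Preadditive.sub_comp, Category.assoc, hr]
      have hir : i ≫ σE ≫ τ.map r = σ' := by
        rw [← Category.assoc, ← hi, Category.assoc, ← τ.map_comp, hr,
          τ.map_id, Category.comp_id]
      refine ⟨s ≫ σE ≫ τ.map r,
        ⟨biprod.lift r p, biprod.desc i s, ?_, ?_⟩, ?_, ?_, by simp⟩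
      · -- hom ≫ inv = 𝟙
        simp only [biprod.lift_desc]
        rw [hps]; abel
      · -- inv ≫ hom = 𝟙
        apply biprod.hom_ext'
        · apply biprod.hom_ext <;> simp [hr, w]
        · apply biprod.hom_ext <;> simp [hsr, hsp]
      · -- commutation with structure maps
        apply tauBiprodExt
        · dsimp only
          rw [Category.assoc, Category.assoc, ← τ.map_comp, biprod.lift_fst,
            deltaSigma_fst,
            biprod.lift_desc, ← Category.assoc p s, hps]
          simp only [Preadditive.sub_comp, Category.id_comp, Category.assoc,
            hir]
          abel
        · dsimp only
          rw [Category.assoc, Category.assoc, ← τ.map_comp, biprod.lift_snd,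
            deltaSigma_snd,
            biprod.lift_desc, hp]
          simp
      · apply biprod.hom_ext <;> simp [hr, w]
    · rintro ⟨g, φ, hcomm, hil, hsnd⟩
      exact ⟨φ.hom ≫ biprod.fst, by rw [← Category.assoc, hil]; simp⟩
end
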